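/- arXiv:1508.00140 — 2 statements merged into one kernel-verified Lean document; each statement's English description precedes it below -/
import Mathlib

section
/- Prim/Kruskal-type greedy optimality: in a complete weighted graph on a finite vertex set with positive edge costs, the spanning tree produced by repeatedly merging the two clusters joined by the cheapest inter-cluster edge (starting from singleton clusters) has total cost equal to the minimum total cost over all connected spanning subgraphs. -/
/-!
Every greedy step merges two distinct clusters, so the clusters stay a partition of `B`, the
`t`-th partition has `n + 1 - t` clusters, and the greedy edges chosen so far connect each
cluster. The greedy edges therefore form a connected planning, and they are pairwise distinct
since the `t`-th edge crosses the `t`-th partition while every earlier edge lies inside a cluster.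

For optimality, let `E` be any connected planning. Contracting the clusters of the `t`-th
partition turns `E` into a connected graph on `n + 1 - t` vertices, so at least `n - t` edges of
`E` cross that partition. By Hall's theorem there are distinct edges `g t ∈ E` with `g t`
crossing the `t`-th partition, and `g t` costs at least as much as the `t`-th greedy edge.
-/

open Finset SimpleGraph Function

theorem Fin.exists_injective_mem_of_sub_le_card {α : Type*} [DecidableEq α] {n : ℕ}
    (F : Fin n → Finset α) (hF : ∀ t : Fin n, n - t ≤ #(F t)) :
    ∃ g : Fin n → α, Injective g ∧ ∀ t, g t ∈ F t := by
  refine (all_card_le_biUnion_card_iff_exists_injective F).mp fun S => ?_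
  rcases S.eq_empty_or_nonempty with rfl | hS
  · simp
  calc #S ≤ #(Ici (S.min' hS)) := card_le_card fun t ht => mem_Ici.mpr (S.min'_le t ht)
    _ = n - S.min' hS := Fin.card_Ici _
    _ ≤ #(F (S.min' hS)) := hF _
    _ ≤ #(S.biUnion F) := card_le_card (subset_biUnion_of_mem F (S.min'_mem hS))

theorem SimpleGraph.Connected.card_le_card_filter_not_isDiag_map_add_one {V C : Type*}
    [Fintype C] [DecidableEq C] {E : Finset (Sym2 V)}
    (hE : (fromEdgeSet (E : Set (Sym2 V))).Connected) {f : V → C} (hf : Surjective f) :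
    Fintype.card C ≤ #{e ∈ E | ¬(e.map f).IsDiag} + 1 := by
  set H := fromEdgeSet ((E.image (Sym2.map f) : Finset (Sym2 C)) : Set (Sym2 C))
  have : Nonempty C := hE.nonempty.map f
  have hH : H.Connected := by
    refine .mk fun c d => ?_
    obtain ⟨a, rfl⟩ := hf c
    obtain ⟨b, rfl⟩ := hf d
    have hab := hE.preconnected a b
    rw [reachable_fromEdgeSet_eq_reflTransGen_toRel] at hab ⊢
    exact hab.lift f fun x y hxy => mem_image_of_mem (Sym2.map f) hxy
  have hsub : H.edgeSet ⊆ ({e ∈ E | ¬(e.map f).IsDiag}.image (Sym2.map f) : Finset (Sym2 C)) := by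
    rw [edgeSet_fromEdgeSet]
    rintro _ ⟨he, hdiag⟩
    obtain ⟨e, heE, rfl⟩ := mem_image.mp he
    exact mem_image_of_mem _ (mem_filter.mpr ⟨heE, hdiag⟩)
  calc Fintype.card C = Nat.card C := Nat.card_eq_fintype_card.symm
    _ ≤ Nat.card H.edgeSet + 1 := hH.card_vert_le_card_edgeSet_add_one
    _ ≤ #({e ∈ E | ¬(e.map f).IsDiag}.image (Sym2.map f)) + 1 := by
      rw [Nat.card_coe_set_eq, ← Set.ncard_coe_finset]
      exact Nat.add_le_add_right (Set.ncard_le_ncard hsub) 1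
    _ ≤ #{e ∈ E | ¬(e.map f).IsDiag} + 1 := by gcongr; exact card_image_le

namespace GreedyClustering

variable {B : Type*}

structure IsClustering (P : Finset (Finset B)) : Prop where
  existsUnique_mem (b : B) : ∃! W, W ∈ P ∧ b ∈ W
  nonempty {W : Finset B} : W ∈ P → W.Nonempty

def Crosses (P : Finset (Finset B)) (e : Sym2 B) : Prop :=
  ∀ W ∈ P, ¬∀ x ∈ e, x ∈ W

variable {P : Finset (Finset B)} {Z Z' W W' : Finset B} {a b : B}

lemma crosses_mk_iff : Crosses P s(a, b) ↔ ∀ W ∈ P, a ∈ W → b ∉ W := by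
  simp [Crosses]

namespace IsClustering

lemma eq_of_mem (hP : IsClustering P) (hW : W ∈ P) (hW' : W' ∈ P) (hbW : b ∈ W)
    (hbW' : b ∈ W') : W = W' :=
  (hP.existsUnique_mem b).unique ⟨hW, hbW⟩ ⟨hW', hbW'⟩

lemma crosses_mk (hP : IsClustering P) (hZ : Z ∈ P) (hZ' : Z' ∈ P) (hne : Z ≠ Z')
    (ha : a ∈ Z) (hb : b ∈ Z') : Crosses P s(a, b) :=
  crosses_mk_iff.mpr fun _ hW haW hbW =>
    hne ((hP.eq_of_mem hZ hW ha haW).trans (hP.eq_of_mem hW hZ' hbW hb))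

lemma exists_of_crosses_mk (hP : IsClustering P) (h : Crosses P s(a, b)) :
    ∃ W ∈ P, ∃ W' ∈ P, W ≠ W' ∧ a ∈ W ∧ b ∈ W' := by
  obtain ⟨W, ⟨hW, haW⟩, -⟩ := hP.existsUnique_mem a
  obtain ⟨W', ⟨hW', hbW'⟩, -⟩ := hP.existsUnique_mem b
  exact ⟨W, hW, W', hW', fun h' => crosses_mk_iff.mp h W hW haW (h' ▸ hbW'), haW, hbW'⟩

lemma not_isDiag_of_crosses (hP : IsClustering P) {e : Sym2 B} (h : Crosses P e) :
    ¬e.IsDiag := by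
  induction e using Sym2.ind with
  | h a b =>
    obtain ⟨W, hW, W', hW', hne, haW, hbW'⟩ := hP.exists_of_crosses_mk h
    rintro (rfl : a = b)
    exact hne (hP.eq_of_mem hW hW' haW hbW')

lemma le_lift_of_crosses {α : Type*} [LE α] (hP : IsClustering P)
    {π : B → B → α} (hsymm : ∀ a b, π a b = π b a) {c : α}
    (hmin : ∀ W W' : Finset B, W ∈ P → W' ∈ P → W ≠ W' → ∀ b ∈ W, ∀ b' ∈ W', c ≤ π b b')
    {e : Sym2 B} (he : Crosses P e) : c ≤ Sym2.lift ⟨π, hsymm⟩ e := by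
  induction e using Sym2.ind with
  | h a b =>
    obtain ⟨W, hW, W', hW', hne, ha, hb⟩ := hP.exists_of_crosses_mk he
    exact hmin W W' hW hW' hne a ha b hb

open Classical in
lemma card_le_card_filter_crosses_add_one (hP : IsClustering P) {E : Finset (Sym2 B)}
    (hE : (fromEdgeSet (E : Set (Sym2 B))).Connected) : #P ≤ #{e ∈ E | Crosses P e} + 1 := by
  choose cl hcl using fun b => (hP.existsUnique_mem b).exists
  let f : B → P := fun b => ⟨cl b, (hcl b).1⟩
  have hf : Surjective f := by
    rintro ⟨W, hW⟩
    obtain ⟨b, hb⟩ := hP.nonempty hW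
    exact ⟨b, Subtype.ext (hP.eq_of_mem (hcl b).1 hW (hcl b).2 hb)⟩
  have hcross : ∀ e, Crosses P e ↔ ¬(e.map f).IsDiag := by
    intro e
    induction e using Sym2.ind with
    | h a b =>
      have hfab : f a = f b ↔ ∃ W ∈ P, a ∈ W ∧ b ∈ W := by
        refine ⟨fun h => ⟨cl a, (hcl a).1, (hcl a).2, ?_⟩, fun ⟨W, hW, haW, hbW⟩ => ?_⟩
        · rw [show cl a = cl b from congrArg Subtype.val h]
          exact (hcl b).2
        · exact Subtype.ext ((hP.eq_of_mem (hcl a).1 hW (hcl a).2 haW).trans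
            (hP.eq_of_mem hW (hcl b).1 hbW (hcl b).2))
      simp only [Sym2.map_mk, Sym2.mk_isDiag_iff, hfab, crosses_mk_iff, not_exists, not_and]
  simpa only [hcross, Fintype.card_coe] using hE.card_le_card_filter_not_isDiag_map_add_one hf

end IsClustering

variable [DecidableEq B]

def merge (P : Finset (Finset B)) (Z Z' : Finset B) : Finset (Finset B) :=
  insert (Z ∪ Z') ((P.erase Z).erase Z')

lemma mem_merge : W ∈ merge P Z Z' ↔ W = Z ∪ Z' ∨ W ≠ Z' ∧ W ≠ Z ∧ W ∈ P := by
  simp [merge]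

lemma exists_subset_mem_merge (hW : W ∈ P) : ∃ V ∈ merge P Z Z', W ⊆ V := by
  by_cases hWZ : W = Z ∨ W = Z'
  · refine ⟨Z ∪ Z', mem_insert_self _ _, ?_⟩
    rcases hWZ with rfl | rfl
    exacts [subset_union_left, subset_union_right]
  · push Not at hWZ
    exact ⟨W, mem_merge.mpr (.inr ⟨hWZ.2, hWZ.1, hW⟩), subset_rfl⟩

lemma Crosses.of_merge {e : Sym2 B} (h : Crosses (merge P Z Z') e) : Crosses P e := by
  intro W hW heW
  obtain ⟨V, hV, hWV⟩ := exists_subset_mem_merge (Z := Z) (Z' := Z') hW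
  exact h V hV fun x hx => hWV (heW x hx)

lemma not_crosses_merge (ha : a ∈ Z) (hb : b ∈ Z') : ¬Crosses (merge P Z Z') s(a, b) := by
  rw [crosses_mk_iff]
  push Not
  exact ⟨Z ∪ Z', mem_insert_self _ _, mem_union_left _ ha, mem_union_right _ hb⟩

lemma IsClustering.card_merge (hP : IsClustering P) (hZ : Z ∈ P) (hZ' : Z' ∈ P) (hne : Z ≠ Z') :
    #(merge P Z Z') + 1 = #P := by
  have hnotin : Z ∪ Z' ∉ (P.erase Z).erase Z' := by
    intro h
    simp only [mem_erase] at h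
    obtain ⟨a, ha⟩ := hP.nonempty hZ
    exact h.2.1 (hP.eq_of_mem h.2.2 hZ (mem_union_left _ ha) ha)
  have h2 : 2 ≤ #P := one_lt_card.mpr ⟨Z, hZ, Z', hZ', hne⟩
  rw [merge, card_insert_of_notMem hnotin, card_erase_of_mem (mem_erase.mpr ⟨hne.symm, hZ'⟩),
    card_erase_of_mem hZ]
  omega

lemma IsClustering.merge (hP : IsClustering P) (hZ : Z ∈ P) (hZ' : Z' ∈ P) :
    IsClustering (merge P Z Z') where
  existsUnique_mem b := by
    obtain ⟨W, ⟨hW, hbW⟩, -⟩ := hP.existsUnique_mem b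
    have hcanon : ∀ U ∈ GreedyClustering.merge P Z Z', b ∈ U →
        U = if b ∈ Z ∪ Z' then Z ∪ Z' else W := by
      intro U hU hbU
      rcases mem_merge.mp hU with rfl | ⟨hUZ', hUZ, hU⟩
      · rw [if_pos hbU]
      · have hbZ : b ∉ Z ∪ Z' := by
          rw [mem_union]
          rintro (hb | hb)
          exacts [hUZ (hP.eq_of_mem hU hZ hbU hb), hUZ' (hP.eq_of_mem hU hZ' hbU hb)]
        rw [if_neg hbZ, hP.eq_of_mem hU hW hbU hbW]
    obtain ⟨V, hV, hWV⟩ := exists_subset_mem_merge (Z := Z) (Z' := Z') hW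
    exact ⟨V, ⟨hV, hWV hbW⟩, fun U ⟨hU, hbU⟩ =>
      (hcanon U hU hbU).trans (hcanon V hV (hWV hbW)).symm⟩
  nonempty hW := by
    rcases mem_merge.mp hW with rfl | ⟨-, -, hW⟩
    exacts [(hP.nonempty hZ).mono subset_union_left, hP.nonempty hW]

variable {n : ℕ} {parts : Fin (n + 1) → Finset (Finset B)} {edge : Fin n → B × B}

def IsMergeRun (parts : Fin (n + 1) → Finset (Finset B)) (edge : Fin n → B × B) : Prop :=
  ∀ t : Fin n, ∃ Z ∈ parts t.castSucc, ∃ Z' ∈ parts t.castSucc, Z ≠ Z' ∧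
    (edge t).1 ∈ Z ∧ (edge t).2 ∈ Z' ∧ parts t.succ = merge (parts t.castSucc) Z Z'

namespace IsMergeRun

lemma isClustering (hrun : IsMergeRun parts edge) (h0 : IsClustering (parts 0))
    (t : Fin (n + 1)) : IsClustering (parts t) := by
  induction t using Fin.induction with
  | zero => exact h0
  | succ t ih =>
    obtain ⟨Z, hZ, Z', hZ', -, -, -, hstep⟩ := hrun t
    exact hstep ▸ ih.merge hZ hZ'

lemma card_add_val (hrun : IsMergeRun parts edge) (h0 : IsClustering (parts 0))
    (t : Fin (n + 1)) : #(parts t) + t = #(parts 0) := by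
  induction t using Fin.induction with
  | zero => rfl
  | succ t ih =>
    obtain ⟨Z, hZ, Z', hZ', hne, -, -, hstep⟩ := hrun t
    have := (hrun.isClustering h0 t.castSucc).card_merge hZ hZ' hne
    rw [hstep, Fin.val_succ]
    rw [Fin.val_castSucc] at ih
    omega

lemma crosses (hrun : IsMergeRun parts edge) (h0 : IsClustering (parts 0)) (t : Fin n) :
    Crosses (parts t.castSucc) s((edge t).1, (edge t).2) := by
  obtain ⟨Z, hZ, Z', hZ', hne, h1, h2, -⟩ := hrun t
  exact (hrun.isClustering h0 _).crosses_mk hZ hZ' hne h1 h2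

lemma not_crosses_of_lt (hrun : IsMergeRun parts edge) {s t : Fin n} (hst : s < t) :
    ¬Crosses (parts t.castSucc) s((edge s).1, (edge s).2) := by
  have hmono : Monotone fun i => ¬Crosses (parts i) s((edge s).1, (edge s).2) :=
    Fin.monotone_iff_le_succ.mpr fun i hi h => by
      obtain ⟨Z, -, Z', -, -, -, -, hstep⟩ := hrun i
      exact hi (hstep ▸ h).of_merge
  obtain ⟨Z, -, Z', -, -, h1, h2, hstep⟩ := hrun s
  have hmerged : ¬Crosses (parts s.succ) s((edge s).1, (edge s).2) :=
    hstep ▸ not_crosses_merge h1 h2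
  exact hmono (Fin.succ_le_castSucc_iff.mpr hst) hmerged

lemma injective (hrun : IsMergeRun parts edge) (h0 : IsClustering (parts 0)) :
    Injective fun t => s((edge t).1, (edge t).2) :=
  Injective.of_lt_imp_ne fun _ t hst heq =>
    hrun.not_crosses_of_lt hst (heq ▸ hrun.crosses h0 t)

lemma reachable (hrun : IsMergeRun parts edge) (h0 : ∀ W ∈ parts 0, (W : Set B).Subsingleton)
    {G : SimpleGraph B} (hG : ∀ t, G.Reachable (edge t).1 (edge t).2) (t : Fin (n + 1)) :
    ∀ W ∈ parts t, ∀ a ∈ W, ∀ b ∈ W, G.Reachable a b := by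
  induction t using Fin.induction with
  | zero =>
    intro W hW a ha b hb
    rw [h0 W hW ha hb]
  | succ t ih =>
    obtain ⟨Z, hZ, Z', hZ', -, h1, h2, hstep⟩ := hrun t
    have hZZ' : ∀ a ∈ Z, ∀ b ∈ Z', G.Reachable a b := fun a ha b hb =>
      ((ih Z hZ a ha _ h1).trans (hG t)).trans (ih Z' hZ' _ h2 b hb)
    intro W hW a ha b hb
    rw [hstep, mem_merge] at hW
    rcases hW with rfl | ⟨-, -, hW⟩
    · rcases mem_union.mp ha with ha | ha <;> rcases mem_union.mp hb with hb | hb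
      exacts [ih Z hZ a ha b hb, hZZ' a ha b hb, (hZZ' b hb a ha).symm, ih Z' hZ' a ha b hb]
    · exact ih W hW a ha b hb

lemma connected [Fintype B] (hrun : IsMergeRun parts edge) (h0 : IsClustering (parts 0))
    (hsub0 : ∀ W ∈ parts 0, (W : Set B).Subsingleton) (hlast : parts (Fin.last n) = {univ}) :
    (fromEdgeSet (univ.image fun t => s((edge t).1, (edge t).2) : Set (Sym2 B))).Connected := by
  have huniv : univ ∈ parts (Fin.last n) := hlast ▸ mem_singleton_self univ
  have : Nonempty B := univ_nonempty_iff.mp ((hrun.isClustering h0 _).nonempty huniv)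
  refine .mk fun a b => hrun.reachable hsub0 (fun t => ?_) _ _ huniv a (mem_univ a) b (mem_univ b)
  rw [reachable_fromEdgeSet_eq_reflTransGen_toRel]
  exact .single (mem_image_of_mem _ (mem_univ t))

open Classical in
lemma exists_injective_crosses (hrun : IsMergeRun parts edge) (h0 : IsClustering (parts 0))
    (hlast : #(parts (Fin.last n)) = 1) {E : Finset (Sym2 B)}
    (hE : (fromEdgeSet (E : Set (Sym2 B))).Connected) :
    ∃ g : Fin n → Sym2 B, Injective g ∧ ∀ t, g t ∈ E ∧ Crosses (parts t.castSucc) (g t) := by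
  have hcard := hrun.card_add_val h0
  obtain ⟨g, hg, hgE⟩ := Fin.exists_injective_mem_of_sub_le_card
    (fun t => {e ∈ E | Crosses (parts t.castSucc) e}) fun t => by
      have h1 := (hrun.isClustering h0 t.castSucc).card_le_card_filter_crosses_add_one hE
      have h2 := hcard t.castSucc
      have h3 := hcard (Fin.last n)
      rw [Fin.val_castSucc] at h2
      rw [Fin.val_last] at h3
      omega
  exact ⟨g, hg, fun t => mem_filter.mp (hgE t)⟩

end IsMergeRun

lemma isClustering_image_singleton [Fintype B] :
    IsClustering (univ.image fun b : B => ({b} : Finset B)) where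
  existsUnique_mem b := ⟨{b}, by simp, by simp⟩
  nonempty hW := by
    obtain ⟨b, -, rfl⟩ := mem_image.mp hW
    exact singleton_nonempty b

end GreedyClustering

open GreedyClustering

theorem stmt3_general {B : Type*} [Fintype B] [DecidableEq B]
    (π : B → B → ℝ) (hsymm : ∀ a b, π a b = π b a) (hpos : ∀ a b, 0 < π a b)
    -- a run of the greedy clustering algorithm:
    (n : ℕ) (parts : Fin (n + 1) → Finset (Finset B)) (edge : Fin n → B × B)
    (hinit : parts 0 = Finset.univ.image (fun b => ({b} : Finset B)))
    (hlast : parts (Fin.last n) = {Finset.univ})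
    (hstep : ∀ t : Fin n, ∃ Z Z' : Finset B,
      Z ∈ parts t.castSucc ∧ Z' ∈ parts t.castSucc ∧ Z ≠ Z' ∧
      (edge t).1 ∈ Z ∧ (edge t).2 ∈ Z' ∧
      -- the chosen edge is the globally cheapest inter-cluster edge
      (∀ W W' : Finset B, W ∈ parts t.castSucc → W' ∈ parts t.castSucc → W ≠ W' →
        ∀ b ∈ W, ∀ b' ∈ W', π (edge t).1 (edge t).2 ≤ π b b') ∧
      parts t.succ = insert (Z ∪ Z') (((parts t.castSucc).erase Z).erase Z')) :
    IsLeast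
      {c : ℝ | ∃ E : Finset (Sym2 B), (∀ e ∈ E, ¬ e.IsDiag) ∧
        (SimpleGraph.fromEdgeSet (E : Set (Sym2 B))).Connected ∧
        c = ∑ e ∈ E, Sym2.lift ⟨π, fun a b => hsymm a b⟩ e}
      (∑ t : Fin n, π (edge t).1 (edge t).2) := by
  have hrun : IsMergeRun parts edge := fun t => by
    obtain ⟨Z, Z', hZ, hZ', hne, h1, h2, -, hmerge⟩ := hstep t
    exact ⟨Z, hZ, Z', hZ', hne, h1, h2, hmerge⟩
  have h0 : IsClustering (parts 0) := hinit ▸ isClustering_image_singleton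
  have hsub0 : ∀ W ∈ parts 0, (W : Set B).Subsingleton := by simp [hinit]
  set w := Sym2.lift ⟨π, fun a b => hsymm a b⟩
  have hw : ∀ e, 0 ≤ w e := Sym2.ind fun a b => (hpos a b).le
  refine ⟨⟨univ.image fun t => s((edge t).1, (edge t).2), ?_, hrun.connected h0 hsub0 hlast, ?_⟩,
    ?_⟩
  · simpa using fun t => (hrun.isClustering h0 _).not_isDiag_of_crosses (hrun.crosses h0 t)
  · rw [sum_image (hrun.injective h0).injOn]
    rfl
  · rintro c ⟨E, -, hE, rfl⟩
    obtain ⟨g, hg, hgE⟩ := hrun.exists_injective_crosses h0 (by simp [hlast]) hE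
    calc ∑ t, π (edge t).1 (edge t).2 ≤ ∑ t, w (g t) := sum_le_sum fun t _ => by
          obtain ⟨-, -, -, -, -, -, -, hmin, -⟩ := hstep t
          exact (hrun.isClustering h0 _).le_lift_of_crosses hsymm hmin (hgE t).2
      _ = ∑ e ∈ univ.image g, w e := (sum_image hg.injOn).symm
      _ ≤ ∑ e ∈ E, w e := sum_le_sum_of_subset_of_nonneg
          (image_subset_iff.mpr fun t _ => (hgE t).1) fun e _ _ => hw e

/-- Greedy clustering (Prim/Kruskal-type) optimality: the spanning tree obtained by
repeatedly adding the globally cheapest inter-cluster edge and merging the two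
clusters has total cost equal to the minimum cost over all connected spanning
plannings (edge subsets of the complete graph). -/
theorem stmt3 {B : Type*} [Fintype B] [DecidableEq B] (hB : 2 ≤ Fintype.card B)
    (π : B → B → ℝ) (hsymm : ∀ a b, π a b = π b a) (hpos : ∀ a b, 0 < π a b)
    -- a run of the greedy clustering algorithm:
    (n : ℕ) (parts : Fin (n + 1) → Finset (Finset B)) (edge : Fin n → B × B)
    (hinit : parts 0 = Finset.univ.image (fun b => ({b} : Finset B)))
    (hlast : parts (Fin.last n) = {Finset.univ})
    (hstep : ∀ t : Fin n, ∃ Z Z' : Finset B,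
      Z ∈ parts t.castSucc ∧ Z' ∈ parts t.castSucc ∧ Z ≠ Z' ∧
      (edge t).1 ∈ Z ∧ (edge t).2 ∈ Z' ∧
      -- the chosen edge is the globally cheapest inter-cluster edge
      (∀ W W' : Finset B, W ∈ parts t.castSucc → W' ∈ parts t.castSucc → W ≠ W' →
        ∀ b ∈ W, ∀ b' ∈ W', π (edge t).1 (edge t).2 ≤ π b b') ∧
      parts t.succ = insert (Z ∪ Z') (((parts t.castSucc).erase Z).erase Z')) :
    IsLeast
      {c : ℝ | ∃ E : Finset (Sym2 B), (∀ e ∈ E, ¬ e.IsDiag) ∧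
        (SimpleGraph.fromEdgeSet (E : Set (Sym2 B))).Connected ∧
        c = ∑ e ∈ E, Sym2.lift ⟨π, fun a b => hsymm a b⟩ e}
      (∑ t : Fin n, π (edge t).1 (edge t).2) :=
  stmt3_general π hsymm hpos n parts edge hinit hlast hstep
end

section
/- If E₁ is an edge set whose graph is K-edge-connected (K edge-disjoint paths between every pair of vertices) and E₂ is an edge set disjoint from E₁ whose graph is connected, then the graph with edge set E₁ ∪ E₂ is (K+1)-edge-connected. -/
/-- There exist at least `K` pairwise edge-disjoint `u`–`v` paths in `G`. -/
def EdgeDisjointPaths {V : Type*} (G : SimpleGraph V) (u v : V) (K : ℕ) : Prop :=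
  ∃ p : Fin K → G.Walk u v, ∀ a b : Fin K, a ≠ b → ∀ e, e ∈ (p a).edges → e ∉ (p b).edges

/-- If `E₁` is `K`-edge-connected and `E₂` is an edge set disjoint from `E₁` whose
graph is connected, then `E₁ ∪ E₂` is `(K+1)`-edge-connected. -/
theorem stmt6 {B : Type*} [Fintype B] [DecidableEq B] (hB : 2 ≤ Fintype.card B)
    (K : ℕ) (E₁ E₂ : Finset (Sym2 B)) (hdisj : Disjoint E₁ E₂)
    (hE₁ : ∀ u v : B, u ≠ v →
      EdgeDisjointPaths (SimpleGraph.fromEdgeSet (E₁ : Set (Sym2 B))) u v K)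
    (hE₂ : (SimpleGraph.fromEdgeSet (E₂ : Set (Sym2 B))).Connected) :
    ∀ u v : B, u ≠ v →
      EdgeDisjointPaths (SimpleGraph.fromEdgeSet ((E₁ ∪ E₂ : Finset (Sym2 B)) : Set (Sym2 B)))
        u v (K + 1) := by
  intro u v huv
  obtain ⟨p, hp⟩ := hE₁ u v huv
  obtain ⟨q⟩ := hE₂.preconnected u v
  set G := SimpleGraph.fromEdgeSet ((E₁ ∪ E₂ : Finset (Sym2 B)) : Set (Sym2 B)) with hG
  have hmem1 : ∀ i : Fin K, ∀ e ∈ (p i).edges, e ∈ (E₁ : Set (Sym2 B)) ∧ ¬ e.IsDiag := by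
    intro i e he
    have := (p i).edges_subset_edgeSet he
    rw [SimpleGraph.edgeSet_fromEdgeSet] at this
    exact this
  have hmem2 : ∀ e ∈ q.edges, e ∈ (E₂ : Set (Sym2 B)) ∧ ¬ e.IsDiag := by
    intro e he
    have := q.edges_subset_edgeSet he
    rw [SimpleGraph.edgeSet_fromEdgeSet] at this
    exact this
  have hGe : G.edgeSet = ((E₁ ∪ E₂ : Finset (Sym2 B)) : Set (Sym2 B)) \ {e | e.IsDiag} := by
    rw [hG, SimpleGraph.edgeSet_fromEdgeSet]; rfl
  have h1 : ∀ i : Fin K, ∀ e ∈ (p i).edges, e ∈ G.edgeSet := by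
    intro i e he
    obtain ⟨h, hd⟩ := hmem1 i e he
    rw [hGe]
    exact ⟨by simp only [Finset.coe_union]; exact Set.mem_union_left _ h, hd⟩
  have h2 : ∀ e ∈ q.edges, e ∈ G.edgeSet := by
    intro e he
    obtain ⟨h, hd⟩ := hmem2 e he
    rw [hGe]
    exact ⟨by simp only [Finset.coe_union]; exact Set.mem_union_right _ h, hd⟩
  refine ⟨Fin.snoc (fun i => (p i).transfer G (h1 i)) (q.transfer G h2), ?_⟩
  intro a b hab e hea heb
  have hdisj' : ∀ e, e ∈ (E₁ : Set (Sym2 B)) → e ∈ (E₂ : Set (Sym2 B)) → False := by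
    intro e h₁ h₂
    exact Finset.disjoint_left.mp hdisj h₁ h₂
  refine Fin.lastCases ?_ ?_ a hab hea <;> clear hab hea
  · -- a = last
    intro hab hea
    rw [Fin.snoc_last, SimpleGraph.Walk.edges_transfer] at hea
    refine Fin.lastCases ?_ ?_ b hab heb
    · intro hab _; exact hab rfl
    · intro i _ heb
      rw [Fin.snoc_castSucc, SimpleGraph.Walk.edges_transfer] at heb
      exact hdisj' e (hmem1 i e heb).1 (hmem2 e hea).1
  · intro i hab hea
    rw [Fin.snoc_castSucc, SimpleGraph.Walk.edges_transfer] at hea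
    refine Fin.lastCases ?_ ?_ b hab heb
    · intro _ heb
      rw [Fin.snoc_last, SimpleGraph.Walk.edges_transfer] at heb
      exact hdisj' e (hmem1 i e hea).1 (hmem2 e heb).1
    · intro j hab heb
      rw [Fin.snoc_castSucc, SimpleGraph.Walk.edges_transfer] at heb
      exact hp i j (fun h => hab (by rw [h])) e hea heb
end
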